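/- Let φ be a constant Drinfeld A[t_1,…,t_s]-module of rank r ≥ 1 (i.e. φ_θ = θ + A_1τ + ⋯ + A_rτ^r with all A_i ∈ ℂ_∞, A_r ≠ 0). Assume the underlying Drinfeld A-module over ℂ_∞ is uniformizable with period lattice of rank r, with A-basis λ_1,…,λ_r ∈ ℂ_∞. Then exp_φ: 𝕋_s → 𝕋_s is surjective, and Λ_φ = ker(exp_φ) ⊆ 𝕋_s is the free A[t_1,…,t_s]-module of rank r spanned by λ_1,…,λ_r. -/

import Mathlib

open Filter

noncomputable section

/-- Membership in the Tate algebra `𝕋_s` over `K`: the coefficients tend to `0`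
(for every `ε > 0` only finitely many coefficients have norm `≥ ε`). -/
def IsTate (K : Type) [NontriviallyNormedField K] (s : ℕ)
    (f : MvPowerSeries (Fin s) K) : Prop :=
  ∀ ε : ℝ, 0 < ε → {ν : Fin s →₀ ℕ | ε ≤ ‖MvPowerSeries.coeff (R := K) ν f‖}.Finite

/-- The Gauss norm `‖f‖_∞ = sup_ν |a_ν|` on the Tate algebra. -/
def gaussNorm (K : Type) [NontriviallyNormedField K] (s : ℕ)
    (f : MvPowerSeries (Fin s) K) : ℝ :=
  ⨆ ν : Fin s →₀ ℕ, ‖MvPowerSeries.coeff (R := K) ν f‖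

/-- The coefficient-wise twist of a power series induced by a ring endomorphism of `K`. -/
def twPS (K : Type) [NontriviallyNormedField K] (s : ℕ) (τK : K →+* K) :
    MvPowerSeries (Fin s) K →+* MvPowerSeries (Fin s) K :=
  MvPowerSeries.map (σ := Fin s) τK

/-- The subring `A = 𝔽_q[θ]` of `ℂ_∞`. -/
def ARing (K : Type) [NontriviallyNormedField K] (q : ℕ) (θ : K) : Subring K :=
  Subring.closure ({θ} ∪ {x : K | x ^ q = x})

/-- The subring `A[t_1,…,t_s] = 𝔽_q[θ][t_1,…,t_s]` of `𝕋_s`. -/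
def AtsSub (K : Type) [NontriviallyNormedField K] (s q : ℕ) (θ : K) :
    Subring (MvPowerSeries (Fin s) K) :=
  Subring.closure
    ({MvPowerSeries.C (σ := Fin s) (R := K) θ} ∪
      Set.range (MvPowerSeries.X : Fin s → MvPowerSeries (Fin s) K) ∪
      {f | ∃ x : K, x ^ q = x ∧ f = MvPowerSeries.C (σ := Fin s) (R := K) x})

/-!
Everything happens coefficient-wise, since `exp_φ (∑ a_ν t^ν) = ∑ exp_φ(a_ν) t^ν`.
The lattice contains the elements `θ^m λ_1` of unbounded norm, which forces
`‖α_i‖ R^{q^i} → 0` for every `R`: the series of `exp_φ` converges everywhere, uniformly on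
bounded sets. Near `0`, `exp_φ` is an additive map with `‖exp_φ x - x‖ ≤ ‖x‖ / 2`, so by the
contraction principle every small `y` has a preimage of norm at most `‖y‖`; taking such preimages
of the small coefficients of `g` keeps the preimage in `𝕋_s`. Conversely, the coefficients of an
element of the kernel lie in the discrete lattice and tend to `0`, so only finitely many are
nonzero: the kernel consists of the polynomials with coefficients in `Λ`, which is the
`A[t_1,…,t_s]`-span of the `λ_i`.
-/

open Topology Finset
open MvPowerSeries (C X coeff coeff_C_mul coeff_mul_C coeff_map)

theorem iterate_eq_pow_pow {R : Type*} [Semiring R] {q : ℕ} {τ : R →+* R}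
    (hτ : ∀ x, τ x = x ^ q) (i : ℕ) (x : R) : τ^[i] x = x ^ q ^ i := by
  induction i with
  | zero => simp
  | succ i ih => rw [Function.iterate_succ_apply', ih, hτ, ← pow_mul, ← pow_succ]

theorem single_apply_mem {ι M S : Type*} [DecidableEq ι] [Zero M] [SetLike S M]
    [ZeroMemClass S M] {s : S} {x : M} (hx : x ∈ s) (j i : ι) : (Pi.single j x : ι → M) i ∈ s := by
  rcases eq_or_ne i j with rfl | h
  · simpa
  · simp [Pi.single_eq_of_ne h, zero_mem]

theorem tendsto_zero_of_tendsto_sum_range {G : Type*} [AddCommGroup G] [TopologicalSpace G]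
    [IsTopologicalAddGroup G] {f : ℕ → G} {a : G}
    (h : Tendsto (fun N => ∑ i ∈ range N, f i) atTop (𝓝 a)) : Tendsto f atTop (𝓝 0) := by
  simpa [sum_range_succ] using (h.comp (tendsto_add_atTop_nat 1)).sub h

theorem exists_norm_le_and_eq_of_norm_sub_self_le {E : Type*} [NormedAddCommGroup E]
    [IsUltrametricDist E] [CompleteSpace E] (F : E →+ E) {δ : ℝ}
    (hF : ∀ x, ‖x‖ ≤ δ → ‖F x - x‖ ≤ 2⁻¹ * ‖x‖) {y : E} (hy : ‖y‖ ≤ δ) :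
    ∃ x, ‖x‖ ≤ ‖y‖ ∧ F x = y := by
  set T : E → E := fun x => y + (x - F x)
  have hball {x : E} (hx : ‖x‖ ≤ ‖y‖) : ‖x - F x‖ ≤ 2⁻¹ * ‖x‖ := by
    rw [norm_sub_rev]; exact hF x (hx.trans hy)
  have hT : Set.MapsTo T (Metric.closedBall 0 ‖y‖) (Metric.closedBall 0 ‖y‖) := by
    intro x hx
    rw [mem_closedBall_zero_iff] at hx ⊢
    refine (IsUltrametricDist.norm_add_le_max _ _).trans (max_le le_rfl ?_)
    linarith [hball hx, norm_nonneg x]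
  have hLip : LipschitzOnWith 2⁻¹ T (Metric.closedBall 0 ‖y‖) := by
    refine LipschitzOnWith.of_dist_le_mul fun a ha b hb => ?_
    rw [mem_closedBall_zero_iff] at ha hb
    have hab : ‖a - b‖ ≤ ‖y‖ := by
      rw [sub_eq_add_neg]
      exact (IsUltrametricDist.norm_add_le_max _ _).trans (max_le ha (by rwa [norm_neg]))
    have : T a - T b = (a - b) - F (a - b) := by simp only [T, map_sub]; abel
    simpa [dist_eq_norm, this] using hball hab
  obtain ⟨x, hx, hfix, -⟩ := ContractingWith.exists_fixedPoint' (K := 2⁻¹)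
    Metric.isClosed_closedBall.isComplete hT ⟨by norm_num, hLip.mapsToRestrict hT⟩
    (Metric.mem_closedBall_self (norm_nonneg y)) (edist_ne_top _ _)
  refine ⟨x, mem_closedBall_zero_iff.1 hx, ?_⟩
  have : y + (x - F x) = x := hfix
  rw [← sub_eq_zero, show F x - y = -(y + (x - F x) - x) by abel, this, sub_self, neg_zero]

section QExp

variable {K : Type*} [NormedField K] {q : ℕ} {α : ℕ → K}

/-- The exponential `∑ α_i x^{q^i}` of a Drinfeld module over `K`. -/
def qExp (α : ℕ → K) (q : ℕ) (x : K) : K :=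
  ∑' i, α i * x ^ q ^ i

/-- The growth condition making `qExp α q` an entire function. -/
def QExpEntire (α : ℕ → K) (q : ℕ) : Prop :=
  ∀ R : ℝ, 0 ≤ R → Tendsto (fun i => ‖α i‖ * R ^ q ^ i) atTop (𝓝 0)

theorem QExpEntire.of_unbounded
    (h : ∀ R : ℝ, ∃ x : K, R ≤ ‖x‖ ∧ Tendsto (fun i => α i * x ^ q ^ i) atTop (𝓝 0)) :
    QExpEntire α q := by
  intro R hR
  obtain ⟨x, hRx, hx⟩ := h R
  refine squeeze_zero (fun i => by positivity) (fun i => ?_) (by simpa using hx.norm)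
  gcongr

variable [IsUltrametricDist K] [CompleteSpace K]

theorem QExpEntire.summable (hα : QExpEntire α q) (x : K) :
    Summable fun i => α i * x ^ q ^ i :=
  NonarchimedeanAddGroup.summable_of_tendsto_cofinite_zero <| by
    rw [Nat.cofinite_eq_atTop, tendsto_zero_iff_norm_tendsto_zero]
    simpa using hα ‖x‖ (norm_nonneg x)

theorem QExpEntire.tendsto_sum_range (hα : QExpEntire α q) (x : K) :
    Tendsto (fun N => ∑ i ∈ range N, α i * x ^ q ^ i) atTop (𝓝 (qExp α q x)) :=
  (hα.summable x).hasSum.tendsto_sum_nat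

theorem QExpEntire.tendsto_norm_sum_range_sub_iff (hα : QExpEntire α q) (x y : K) :
    Tendsto (fun N => ‖(∑ i ∈ range N, α i * x ^ q ^ i) - y‖) atTop (𝓝 0) ↔
      qExp α q x = y := by
  rw [← tendsto_iff_norm_sub_tendsto_zero]
  exact ⟨tendsto_nhds_unique (hα.tendsto_sum_range x), fun h => h ▸ hα.tendsto_sum_range x⟩

theorem QExpEntire.tendstoUniformlyOn_sum_range (hα : QExpEntire α q) (M : ℝ) :
    TendstoUniformlyOn (fun N x => ∑ i ∈ range N, α i * x ^ q ^ i) (qExp α q) atTop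
      (Metric.closedBall 0 M) := by
  rcases lt_or_ge M 0 with hM | hM
  · simp [Metric.closedBall_eq_empty.2 hM, tendstoUniformlyOn_empty]
  rw [Metric.tendstoUniformlyOn_iff]
  intro ε hε
  obtain ⟨N₀, hN₀⟩ := eventually_atTop.1 ((hα M hM).eventually (gt_mem_nhds (half_pos hε)))
  filter_upwards [eventually_ge_atTop N₀] with N hN x hx
  rw [dist_eq_norm, qExp, ← (hα.summable x).sum_add_tsum_nat_add N, add_sub_cancel_left]
  refine (IsUltrametricDist.norm_tsum_le_of_forall_le_of_nonneg (half_pos hε).le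
    fun i => ?_).trans_lt (half_lt_self hε)
  rw [norm_mul, norm_pow]
  calc ‖α (i + N)‖ * ‖x‖ ^ q ^ (i + N) ≤ ‖α (i + N)‖ * M ^ q ^ (i + N) := by
        gcongr; simpa using hx
    _ ≤ ε / 2 := (hN₀ _ (by omega)).le

theorem qExp_add {τ : K →+* K} (hτ : ∀ x, τ x = x ^ q) (hα : QExpEntire α q) (x y : K) :
    qExp α q (x + y) = qExp α q x + qExp α q y := by
  rw [qExp, qExp, qExp, ← (hα.summable x).tsum_add (hα.summable y)]
  refine tsum_congr fun i => ?_
  simp only [← iterate_eq_pow_pow hτ, iterate_map_add, mul_add]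

theorem QExpEntire.exists_norm_qExp_sub_self_le (hα : QExpEntire α q) (hα0 : α 0 = 1)
    (hq : 2 ≤ q) : ∃ δ > 0, ∀ x : K, ‖x‖ ≤ δ → ‖qExp α q x - x‖ ≤ 2⁻¹ * ‖x‖ := by
  obtain ⟨B, hB⟩ := (hα 1 zero_le_one).bddAbove_range
  set L := max B 1
  have hL : 0 < L := lt_max_of_lt_right one_pos
  have hαL (i : ℕ) : ‖α i‖ ≤ L := le_max_of_le_left (by simpa using hB ⟨i, rfl⟩)
  refine ⟨(2 * L)⁻¹, by positivity, fun x hx => ?_⟩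
  have hx1 : ‖x‖ ≤ 1 := hx.trans (inv_le_one_of_one_le₀ (by linarith [le_max_right B 1]))
  rw [qExp, (hα.summable x).tsum_eq_zero_add, hα0, pow_zero, pow_one, one_mul,
    add_sub_cancel_left]
  refine IsUltrametricDist.norm_tsum_le_of_forall_le_of_nonneg (by positivity) fun i => ?_
  rw [norm_mul, norm_pow]
  calc ‖α (i + 1)‖ * ‖x‖ ^ q ^ (i + 1) ≤ L * ‖x‖ ^ 2 := by
        refine mul_le_mul (hαL _) ?_ (by positivity) hL.le
        exact pow_le_pow_of_le_one (norm_nonneg x) hx1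
            (hq.trans (Nat.le_self_pow (Nat.succ_ne_zero i) q))
    _ ≤ L * ((2 * L)⁻¹ * ‖x‖) := by rw [sq]; gcongr
    _ = 2⁻¹ * ‖x‖ := by field_simp

end QExp

section Tate

variable {K : Type} [NontriviallyNormedField K] {s : ℕ}

theorem gaussNorm_nonneg (f : MvPowerSeries (Fin s) K) : 0 ≤ gaussNorm K s f :=
  Real.iSup_nonneg fun _ => norm_nonneg _

theorem gaussNorm_le {f : MvPowerSeries (Fin s) K} {M : ℝ} (hM : 0 ≤ M)
    (h : ∀ ν, ‖coeff ν f‖ ≤ M) : gaussNorm K s f ≤ M :=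
  Real.iSup_le h hM

theorem norm_coeff_le_gaussNorm {f : MvPowerSeries (Fin s) K}
    (hf : BddAbove (Set.range fun ν => ‖coeff ν f‖)) (ν : Fin s →₀ ℕ) :
    ‖coeff ν f‖ ≤ gaussNorm K s f :=
  le_ciSup hf ν

theorem tendsto_gaussNorm_zero_of_eventually_le {ι : Type*} {l : Filter ι} {F : ι → MvPowerSeries (Fin s) K}
    (h : ∀ ε > 0, ∀ᶠ n in l, ∀ ν, ‖coeff ν (F n)‖ ≤ ε) :
    Tendsto (fun n => gaussNorm K s (F n)) l (𝓝 0) := by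
  refine Metric.tendsto_nhds.2 fun ε hε => (h (ε / 2) (half_pos hε)).mono fun n hn => ?_
  rw [Real.dist_0_eq_abs, abs_of_nonneg (gaussNorm_nonneg _)]
  exact (gaussNorm_le (half_pos hε).le hn).trans_lt (half_lt_self hε)

theorem tendsto_coeff_zero_of_tendsto_gaussNorm {ι : Type*} {l : Filter ι}
    {F : ι → MvPowerSeries (Fin s) K} (hF : ∀ n, BddAbove (Set.range fun ν => ‖coeff ν (F n)‖))
    (h : Tendsto (fun n => gaussNorm K s (F n)) l (𝓝 0)) (ν : Fin s →₀ ℕ) :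
    Tendsto (fun n => coeff ν (F n)) l (𝓝 0) :=
  tendsto_zero_iff_norm_tendsto_zero.2 <|
    squeeze_zero (fun _ => norm_nonneg _) (fun n => norm_coeff_le_gaussNorm (hF n) ν) h

theorem IsTate.bddAbove {f : MvPowerSeries (Fin s) K} (hf : IsTate K s f) :
    BddAbove (Set.range fun ν => ‖coeff ν f‖) := by
  obtain ⟨M, hM⟩ := ((hf 1 one_pos).image fun ν => ‖coeff ν f‖).bddAbove
  refine ⟨max M 1, ?_⟩
  rintro _ ⟨ν, rfl⟩
  by_cases hν : 1 ≤ ‖coeff ν f‖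
  · exact le_max_of_le_left (hM ⟨ν, hν, rfl⟩)
  · exact le_max_of_le_right (not_le.1 hν).le

theorem IsTate.of_norm_coeff_le {f g : MvPowerSeries (Fin s) K} (hg : IsTate K s g) {δ : ℝ}
    (hδ : 0 < δ) (h : ∀ ν, ‖coeff ν g‖ ≤ δ → ‖coeff ν f‖ ≤ ‖coeff ν g‖) : IsTate K s f := by
  intro ε hε
  refine ((hg δ hδ).union (hg ε hε)).subset fun ν (hν : ε ≤ ‖coeff ν f‖) => ?_
  by_cases hgν : ‖coeff ν g‖ ≤ δ
  · exact Or.inr (hν.trans (h ν hgν))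
  · exact Or.inl (not_le.1 hgν).le

theorem IsTate.finite_support_of_discrete {f : MvPowerSeries (Fin s) K} (hf : IsTate K s f)
    {ε : ℝ} (hε : 0 < ε) (h : ∀ ν, ‖coeff ν f‖ < ε → coeff ν f = 0) :
    (Function.support fun ν => coeff ν f).Finite :=
  (hf ε hε).subset fun ν hν => not_lt.1 fun hlt => hν (h ν hlt)

theorem coeff_iterate_twPS (τ : K →+* K) (i : ℕ) (f : MvPowerSeries (Fin s) K)
    (ν : Fin s →₀ ℕ) : coeff ν ((twPS K s τ)^[i] f) = τ^[i] (coeff ν f) := by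
  induction i with
  | zero => rfl
  | succ i ih =>
    rw [Function.iterate_succ_apply', Function.iterate_succ_apply', ← ih]
    exact coeff_map τ ν _

/-- The partial sums of `exp_φ f = ∑ α_i τ^i(f)` on `𝕋_s`. -/
def expPartialSum (τ : K →+* K) (α : ℕ → K) (N : ℕ) (f : MvPowerSeries (Fin s) K) :
    MvPowerSeries (Fin s) K :=
  ∑ i ∈ range N, C (α i) * (twPS K s τ)^[i] f

variable {q : ℕ} {τ : K →+* K} {α : ℕ → K}

theorem coeff_expPartialSum (hτ : ∀ x, τ x = x ^ q) (N : ℕ) (f : MvPowerSeries (Fin s) K)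
    (ν : Fin s →₀ ℕ) :
    coeff ν (expPartialSum τ α N f) = ∑ i ∈ range N, α i * coeff ν f ^ q ^ i := by
  simp only [expPartialSum, map_sum, coeff_C_mul, coeff_iterate_twPS, iterate_eq_pow_pow hτ]

variable [IsUltrametricDist K] [CompleteSpace K]

theorem exists_isTate_tendsto_gaussNorm_expPartialSum_sub (hτ : ∀ x, τ x = x ^ q)
    (hα : QExpEntire α q) (hsurj : Function.Surjective (qExp α q)) {δ : ℝ} (hδ : 0 < δ)
    (hsmall : ∀ y, ‖y‖ ≤ δ → ∃ x, ‖x‖ ≤ ‖y‖ ∧ qExp α q x = y) {g : MvPowerSeries (Fin s) K}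
    (hg : IsTate K s g) :
    ∃ f, IsTate K s f ∧
      Tendsto (fun N => gaussNorm K s (expPartialSum τ α N f - g)) atTop (𝓝 0) := by
  have hpre (ν) : ∃ x, (‖coeff ν g‖ ≤ δ → ‖x‖ ≤ ‖coeff ν g‖) ∧ qExp α q x = coeff ν g := by
    by_cases hν : ‖coeff ν g‖ ≤ δ
    · obtain ⟨x, hx, hEx⟩ := hsmall _ hν
      exact ⟨x, fun _ => hx, hEx⟩
    · obtain ⟨x, hEx⟩ := hsurj (coeff ν g)
      exact ⟨x, (absurd · hν), hEx⟩
  obtain ⟨f, hf, hEf⟩ : ∃ f : MvPowerSeries (Fin s) K,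
      (∀ ν, ‖coeff ν g‖ ≤ δ → ‖coeff ν f‖ ≤ ‖coeff ν g‖) ∧
        ∀ ν, qExp α q (coeff ν f) = coeff ν g := by
    choose x hx hEx using hpre
    exact ⟨x, hx, hEx⟩
  have hfT : IsTate K s f := hg.of_norm_coeff_le hδ hf
  obtain ⟨M, hM⟩ := hfT.bddAbove
  refine ⟨f, hfT, tendsto_gaussNorm_zero_of_eventually_le fun ε hε => ?_⟩
  filter_upwards [Metric.tendstoUniformlyOn_iff.1 (hα.tendstoUniformlyOn_sum_range M) ε hε]
    with N hN ν
  rw [map_sub, coeff_expPartialSum hτ, ← hEf ν, ← dist_eq_norm, dist_comm]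
  exact (hN _ (mem_closedBall_zero_iff.2 (hM ⟨ν, rfl⟩))).le

theorem qExp_coeff_eq_zero_of_tendsto_gaussNorm (hτ : ∀ x, τ x = x ^ q)
    (hα : QExpEntire α q) {f : MvPowerSeries (Fin s) K} (hf : IsTate K s f)
    (h : Tendsto (fun N => gaussNorm K s (expPartialSum τ α N f)) atTop (𝓝 0))
    (ν : Fin s →₀ ℕ) : qExp α q (coeff ν f) = 0 := by
  obtain ⟨M, hM⟩ := hf.bddAbove
  have hbdd (N : ℕ) : BddAbove (Set.range fun μ => ‖coeff μ (expPartialSum τ α N f)‖) := by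
    refine ⟨∑ i ∈ range N, ‖α i‖ * M ^ q ^ i, ?_⟩
    rintro _ ⟨μ, rfl⟩
    dsimp only
    rw [coeff_expPartialSum hτ]
    refine (norm_sum_le _ _).trans (sum_le_sum fun i _ => ?_)
    rw [norm_mul, norm_pow]
    gcongr
    exact hM ⟨μ, rfl⟩
  have := tendsto_coeff_zero_of_tendsto_gaussNorm hbdd h ν
  simp only [coeff_expPartialSum hτ] at this
  exact tendsto_nhds_unique (hα.tendsto_sum_range _) this

theorem tendsto_gaussNorm_expPartialSum_of_finite (hτ : ∀ x, τ x = x ^ q)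
    (hα : QExpEntire α q) {f : MvPowerSeries (Fin s) K}
    (hfin : (Function.support fun ν => coeff ν f).Finite)
    (hker : ∀ ν, qExp α q (coeff ν f) = 0) :
    Tendsto (fun N => gaussNorm K s (expPartialSum τ α N f)) atTop (𝓝 0) := by
  refine tendsto_gaussNorm_zero_of_eventually_le fun ε hε => ?_
  have hsmall (ν) (_ : ν ∈ hfin.toFinset) :
      ∀ᶠ N in atTop, ‖∑ i ∈ range N, α i * coeff ν f ^ q ^ i‖ ≤ ε :=
    (hα.tendsto_sum_range _).norm.eventually (ge_mem_nhds (by rwa [hker, norm_zero]))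
  filter_upwards [(eventually_all_finset _).2 hsmall] with N hN ν
  rw [coeff_expPartialSum hτ]
  by_cases hν : coeff ν f = 0
  · simp [hν, ← iterate_eq_pow_pow hτ, hε.le]
  · exact hN ν (hfin.mem_toFinset.2 hν)

theorem tendsto_gaussNorm_expPartialSum_iff (hτ : ∀ x, τ x = x ^ q) (hα : QExpEntire α q)
    {ε : ℝ} (hε : 0 < ε) (hdisc : ∀ x, qExp α q x = 0 → ‖x‖ < ε → x = 0)
    {f : MvPowerSeries (Fin s) K} (hf : IsTate K s f) :
    Tendsto (fun N => gaussNorm K s (expPartialSum τ α N f)) atTop (𝓝 0) ↔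
      (Function.support fun ν => coeff ν f).Finite ∧ ∀ ν, qExp α q (coeff ν f) = 0 := by
  refine ⟨fun h => ?_, fun h => tendsto_gaussNorm_expPartialSum_of_finite hτ hα h.1 h.2⟩
  have hker := qExp_coeff_eq_zero_of_tendsto_gaussNorm hτ hα hf h
  exact ⟨hf.finite_support_of_discrete hε fun ν => hdisc _ (hker ν), hker⟩

end Tate

section Polynomials

variable {K : Type} [NontriviallyNormedField K] {s q : ℕ} {θ : K}

theorem self_mem_ARing : θ ∈ ARing K q θ :=
  Subring.subset_closure (Or.inl rfl)

def polyToPowerSeries : MvPolynomial (Fin s) (ARing K q θ) →+* MvPowerSeries (Fin s) K :=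
  MvPolynomial.coeToMvPowerSeries.ringHom.comp (MvPolynomial.map (ARing K q θ).subtype)

theorem coeff_polyToPowerSeries (p : MvPolynomial (Fin s) (ARing K q θ)) (ν : Fin s →₀ ℕ) :
    coeff ν (polyToPowerSeries p) = p.coeff ν := by
  simp [polyToPowerSeries, MvPolynomial.coeToMvPowerSeries.ringHom_apply, MvPolynomial.coeff_map]

theorem AtsSub_eq_range :
    AtsSub K s q θ = (polyToPowerSeries (s := s) (q := q) (θ := θ)).range := by
  have hmapC (a : ARing K q θ) :
      polyToPowerSeries (MvPolynomial.C a : MvPolynomial (Fin s) _) = C (a : K) := by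
    simp [polyToPowerSeries, MvPolynomial.coeToMvPowerSeries.ringHom_apply]
  have hmapX (i : Fin s) : polyToPowerSeries (MvPolynomial.X i : MvPolynomial _ (ARing K q θ)) =
      X i := by
    simp [polyToPowerSeries, MvPolynomial.coeToMvPowerSeries.ringHom_apply]
  have hCmem : ARing K q θ ≤ (AtsSub K s q θ).comap C := by
    refine Subring.closure_le.2 ?_
    rintro x (rfl | hx)
    · exact Subring.subset_closure (Or.inl (Or.inl rfl))
    · exact Subring.subset_closure (Or.inr ⟨x, hx, rfl⟩)
  apply le_antisymm
  · refine Subring.closure_le.2 ?_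
    rintro f ((rfl | ⟨i, rfl⟩) | ⟨x, hx, rfl⟩)
    · exact ⟨_, hmapC ⟨θ, self_mem_ARing⟩⟩
    · exact ⟨_, hmapX i⟩
    · exact ⟨_, hmapC ⟨x, Subring.subset_closure (Or.inr hx)⟩⟩
  · rintro _ ⟨p, rfl⟩
    induction p using MvPolynomial.induction_on with
    | C a => rw [hmapC]; exact hCmem a.2
    | add p₁ p₂ hp₁ hp₂ => rw [map_add]; exact add_mem hp₁ hp₂
    | mul_X p i hp =>
      rw [map_mul, hmapX]
      exact mul_mem hp (Subring.subset_closure (Or.inl (Or.inr ⟨i, rfl⟩)))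

theorem mem_AtsSub_iff {f : MvPowerSeries (Fin s) K} :
    f ∈ AtsSub K s q θ ↔
      (Function.support fun ν => coeff ν f).Finite ∧ ∀ ν, coeff ν f ∈ ARing K q θ := by
  rw [AtsSub_eq_range]
  constructor
  · rintro ⟨p, rfl⟩
    simp only [coeff_polyToPowerSeries]
    refine ⟨p.support.finite_toSet.subset fun ν hν => ?_, fun ν => (p.coeff ν).2⟩
    exact MvPolynomial.mem_support_iff.2 fun h => hν (by simp [h])
  · rintro ⟨hfin, hA⟩
    let p : MvPolynomial (Fin s) (ARing K q θ) := .ofCoeff <| Finsupp.ofSupportFinite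
      (fun ν => (⟨coeff ν f, hA ν⟩ : ARing K q θ))
      (hfin.subset fun ν hν h => hν (Subtype.ext h))
    exact ⟨p, MvPowerSeries.ext fun ν => coeff_polyToPowerSeries p ν⟩

end Polynomials

section Span

variable {K : Type} [NontriviallyNormedField K] {s q r : ℕ} {θ : K} {lam : Fin r → K}

theorem coeff_sum_mul_C (a : Fin r → MvPowerSeries (Fin s) K) (ν : Fin s →₀ ℕ) :
    coeff ν (∑ i, a i * C (lam i)) = ∑ i, coeff ν (a i) * lam i := by
  simp only [map_sum, coeff_mul_C]

theorem exists_mem_AtsSub_eq_sum_mul_C_iff (f : MvPowerSeries (Fin s) K) :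
    (∃ a : Fin r → MvPowerSeries (Fin s) K, (∀ i, a i ∈ AtsSub K s q θ) ∧
        f = ∑ i, a i * C (lam i)) ↔
      (Function.support fun ν => coeff ν f).Finite ∧
        ∀ ν, ∃ c : Fin r → K, (∀ i, c i ∈ ARing K q θ) ∧ coeff ν f = ∑ i, c i * lam i := by
  constructor
  · rintro ⟨a, ha, rfl⟩
    have ha' (i : Fin r) := mem_AtsSub_iff.1 (ha i)
    refine ⟨(Set.finite_iUnion fun i => (ha' i).1).subset fun ν hν => ?_,
      fun ν => ⟨fun i => coeff ν (a i), fun i => (ha' i).2 ν, coeff_sum_mul_C a ν⟩⟩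
    rw [Function.mem_support, coeff_sum_mul_C] at hν
    obtain ⟨i, -, hi⟩ := exists_ne_zero_of_sum_ne_zero hν
    exact Set.mem_iUnion.2 ⟨i, left_ne_zero_of_mul hi⟩
  · classical
    rintro ⟨hfin, hc⟩
    choose c hcA hc using hc
    -- the `if` keeps the support of `a i` inside that of `f`
    let a (i : Fin r) : MvPowerSeries (Fin s) K := fun ν => if coeff ν f = 0 then 0 else c ν i
    have hcoeff (i : Fin r) (ν) : coeff ν (a i) = if coeff ν f = 0 then 0 else c ν i := rfl
    refine ⟨a, fun i => mem_AtsSub_iff.2 ⟨hfin.subset fun ν hν h => hν ?_, fun ν => ?_⟩, ?_⟩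
    · simp [hcoeff, h]
    · rw [hcoeff]; split_ifs
      exacts [zero_mem _, hcA ν i]
    · ext ν
      rw [coeff_sum_mul_C]
      by_cases h : coeff ν f = 0 <;> simp [hcoeff, h, hc ν]

theorem eq_zero_of_sum_mul_C_eq_zero
    (hind : ∀ c : Fin r → K, (∀ i, c i ∈ ARing K q θ) → ∑ i, c i * lam i = 0 → ∀ i, c i = 0)
    (a : Fin r → MvPowerSeries (Fin s) K) (ha : ∀ i, a i ∈ AtsSub K s q θ)
    (h : ∑ i, a i * C (lam i) = 0) (i : Fin r) : a i = 0 := by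
  ext ν
  have hν := congrArg (coeff ν) h
  rw [coeff_sum_mul_C, map_zero] at hν
  simpa using hind _ (fun j => (mem_AtsSub_iff.1 (ha j)).2 ν) hν i

theorem exists_mem_ARing_le_norm_sum_mul (hθ : 1 < ‖θ‖) {j : Fin r} (hj : lam j ≠ 0) (R : ℝ) :
    ∃ c : Fin r → K, (∀ i, c i ∈ ARing K q θ) ∧ R ≤ ‖∑ i, c i * lam i‖ := by
  obtain ⟨m, hm⟩ := pow_unbounded_of_one_lt (R / ‖lam j‖) hθ
  refine ⟨Pi.single j (θ ^ m), single_apply_mem (pow_mem self_mem_ARing m) j, ?_⟩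
  rw [div_lt_iff₀ (norm_pos_iff.2 hj)] at hm
  simpa [Pi.single_apply] using hm.le

end Span

theorem stmt17_general
    (K : Type) [NontriviallyNormedField K] [IsUltrametricDist K] [CompleteSpace K]
    (q : ℕ) (hq : IsPrimePow q)
    (τK : K ≃+* K) (hτK : ∀ x : K, τK x = x ^ q)
    (s : ℕ) (r : ℕ) (hr : 0 < r)
    (θ : K) (hθ : ‖θ‖ = q)
    -- the exponential coefficients of the constant Drinfeld module, all in ℂ_∞
    (αC : ℕ → K) (hα0 : αC 0 = 1)
    -- classical facts over ℂ_∞: exp is surjective …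
    (hsurjC : ∀ y : K, ∃ x : K,
      Filter.Tendsto (fun N : ℕ => ‖(∑ i ∈ Finset.range N, αC i * x ^ q ^ i) - y‖)
        Filter.atTop (nhds 0))
    -- … with kernel the A-span of λ_1, …, λ_r …
    (lamC : Fin r → K)
    (hkerC : ∀ x : K,
      (Filter.Tendsto (fun N : ℕ => ‖∑ i ∈ Finset.range N, αC i * x ^ q ^ i‖)
        Filter.atTop (nhds 0))
      ↔ ∃ a : Fin r → K, (∀ i, a i ∈ ARing K q θ) ∧ x = ∑ i : Fin r, a i * lamC i)
    -- … where λ_1, …, λ_r are A-linearly independent and the kernel is discrete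
    (hindC : ∀ a : Fin r → K, (∀ i, a i ∈ ARing K q θ) →
      ∑ i : Fin r, a i * lamC i = 0 → ∀ i, a i = 0)
    (hdiscC : ∃ ε : ℝ, 0 < ε ∧ ∀ x : K,
      Filter.Tendsto (fun N : ℕ => ‖∑ i ∈ Finset.range N, αC i * x ^ q ^ i‖)
        Filter.atTop (nhds 0) → ‖x‖ < ε → x = 0) :
    -- exp_φ : 𝕋_s → 𝕋_s is surjective
    (∀ g : MvPowerSeries (Fin s) K, IsTate K s g →
      ∃ f : MvPowerSeries (Fin s) K, IsTate K s f ∧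
        Filter.Tendsto (fun N : ℕ => gaussNorm K s
            ((∑ i ∈ Finset.range N,
              MvPowerSeries.C (σ := Fin s) (R := K) (αC i) * (⇑(twPS K s τK.toRingHom))^[i] f) - g))
          Filter.atTop (nhds 0)) ∧
    -- Λ_φ is spanned over A[t_s] by λ_1, …, λ_r …
    (∀ f : MvPowerSeries (Fin s) K, IsTate K s f →
      (Filter.Tendsto (fun N : ℕ => gaussNorm K s
          (∑ i ∈ Finset.range N,
            MvPowerSeries.C (σ := Fin s) (R := K) (αC i) * (⇑(twPS K s τK.toRingHom))^[i] f))
        Filter.atTop (nhds 0)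
      ↔ ∃ a : Fin r → MvPowerSeries (Fin s) K,
          (∀ i, a i ∈ AtsSub K s q θ) ∧
          f = ∑ i : Fin r, a i * MvPowerSeries.C (σ := Fin s) (R := K) (lamC i))) ∧
    -- … and freely so
    (∀ a : Fin r → MvPowerSeries (Fin s) K, (∀ i, a i ∈ AtsSub K s q θ) →
      ∑ i : Fin r, a i * MvPowerSeries.C (σ := Fin s) (R := K) (lamC i) = 0 → ∀ i, a i = 0) := by
  have hq2 : 2 ≤ q := hq.two_le
  have hτ : ∀ x, τK.toRingHom x = x ^ q := hτK
  let j : Fin r := ⟨0, hr⟩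
  have hlam : lamC j ≠ 0 := fun h => by
    simpa using hindC (Pi.single j 1) (single_apply_mem (one_mem (ARing K q θ)) j)
      (by simp [Pi.single_apply, h]) j
  -- the lattice is unbounded, so the series converges at points of arbitrarily large norm
  have hα : QExpEntire αC q := QExpEntire.of_unbounded fun R => by
    obtain ⟨c, hc, hR⟩ := exists_mem_ARing_le_norm_sum_mul (q := q)
      (by rw [hθ]; exact_mod_cast hq2) hlam R
    exact ⟨_, hR, tendsto_zero_of_tendsto_sum_range <|
      tendsto_zero_iff_norm_tendsto_zero.2 ((hkerC _).2 ⟨c, hc, rfl⟩)⟩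
  have hE0 (x : K) : Tendsto (fun N => ‖∑ i ∈ range N, αC i * x ^ q ^ i‖) atTop (𝓝 0) ↔
      qExp αC q x = 0 := by
    simpa using hα.tendsto_norm_sum_range_sub_iff x 0
  obtain ⟨ε, hε, hdisc⟩ := hdiscC
  obtain ⟨δ, hδ, hδE⟩ := hα.exists_norm_qExp_sub_self_le hα0 hq2
  let E : K →+ K := AddMonoidHom.mk' (qExp αC q) (qExp_add hτ hα)
  refine ⟨fun g hg => ?_, fun f hf => ?_, eq_zero_of_sum_mul_C_eq_zero hindC⟩
  · refine exists_isTate_tendsto_gaussNorm_expPartialSum_sub hτ hα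
      (fun y => ?_) hδ (fun y hy => exists_norm_le_and_eq_of_norm_sub_self_le E hδE hy) hg
    obtain ⟨x, hx⟩ := hsurjC y
    exact ⟨x, (hα.tendsto_norm_sum_range_sub_iff x y).1 hx⟩
  · refine (tendsto_gaussNorm_expPartialSum_iff hτ hα hε (fun x hx => hdisc x ((hE0 x).2 hx))
      hf).trans ?_
    rw [exists_mem_AtsSub_eq_sum_mul_C_iff]
    simp only [← hE0, hkerC]

/-- let `φ` be a constant Drinfeld `A[t_1,…,t_s]`-module of rank `r`
(`φ_θ = θ + A_1τ + ⋯ + A_rτ^r` with `A_i ∈ ℂ_∞`). If the underlying Drinfeld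
`A`-module over `ℂ_∞` is uniformizable with period lattice of rank `r` and `A`-basis
`λ_1,…,λ_r`, then `exp_φ : 𝕋_s → 𝕋_s` is surjective and
`Λ_φ = ker(exp_φ) ⊆ 𝕋_s` is the free `A[t_1,…,t_s]`-module of rank `r` spanned by
`λ_1,…,λ_r`. -/
theorem stmt17
    (K : Type) [NontriviallyNormedField K] [IsUltrametricDist K] [CompleteSpace K]
    (q : ℕ) (hq : IsPrimePow q)
    (τK : K ≃+* K) (hτK : ∀ x : K, τK x = x ^ q)
    (s : ℕ) (r : ℕ) (hr : 0 < r)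
    (θ : K) (hθ : ‖θ‖ = q)
    (A : ℕ → K) (hAr : A r ≠ 0)
    -- the exponential coefficients of the constant Drinfeld module, all in ℂ_∞
    (αC : ℕ → K) (hα0 : αC 0 = 1)
    (hαrec : ∀ i : ℕ, 1 ≤ i →
      (θ ^ q ^ i - θ) * αC i
        = ∑ k ∈ Finset.Icc 1 r, if k ≤ i then A k * (αC (i - k)) ^ q ^ k else 0)
    -- classical facts over ℂ_∞: exp is surjective …
    (hsurjC : ∀ y : K, ∃ x : K,
      Filter.Tendsto (fun N : ℕ => ‖(∑ i ∈ Finset.range N, αC i * x ^ q ^ i) - y‖)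
        Filter.atTop (nhds 0))
    -- … with kernel the A-span of λ_1, …, λ_r …
    (lamC : Fin r → K)
    (hkerC : ∀ x : K,
      (Filter.Tendsto (fun N : ℕ => ‖∑ i ∈ Finset.range N, αC i * x ^ q ^ i‖)
        Filter.atTop (nhds 0))
      ↔ ∃ a : Fin r → K, (∀ i, a i ∈ ARing K q θ) ∧ x = ∑ i : Fin r, a i * lamC i)
    -- … where λ_1, …, λ_r are A-linearly independent and the kernel is discrete
    (hindC : ∀ a : Fin r → K, (∀ i, a i ∈ ARing K q θ) →
      ∑ i : Fin r, a i * lamC i = 0 → ∀ i, a i = 0)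
    (hdiscC : ∃ ε : ℝ, 0 < ε ∧ ∀ x : K,
      Filter.Tendsto (fun N : ℕ => ‖∑ i ∈ Finset.range N, αC i * x ^ q ^ i‖)
        Filter.atTop (nhds 0) → ‖x‖ < ε → x = 0) :
    -- exp_φ : 𝕋_s → 𝕋_s is surjective
    (∀ g : MvPowerSeries (Fin s) K, IsTate K s g →
      ∃ f : MvPowerSeries (Fin s) K, IsTate K s f ∧
        Filter.Tendsto (fun N : ℕ => gaussNorm K s
            ((∑ i ∈ Finset.range N,
              MvPowerSeries.C (σ := Fin s) (R := K) (αC i) * (⇑(twPS K s τK.toRingHom))^[i] f) - g))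
          Filter.atTop (nhds 0)) ∧
    -- Λ_φ is spanned over A[t_s] by λ_1, …, λ_r …
    (∀ f : MvPowerSeries (Fin s) K, IsTate K s f →
      (Filter.Tendsto (fun N : ℕ => gaussNorm K s
          (∑ i ∈ Finset.range N,
            MvPowerSeries.C (σ := Fin s) (R := K) (αC i) * (⇑(twPS K s τK.toRingHom))^[i] f))
        Filter.atTop (nhds 0)
      ↔ ∃ a : Fin r → MvPowerSeries (Fin s) K,
          (∀ i, a i ∈ AtsSub K s q θ) ∧
          f = ∑ i : Fin r, a i * MvPowerSeries.C (σ := Fin s) (R := K) (lamC i))) ∧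
    -- … and freely so
    (∀ a : Fin r → MvPowerSeries (Fin s) K, (∀ i, a i ∈ AtsSub K s q θ) →
      ∑ i : Fin r, a i * MvPowerSeries.C (σ := Fin s) (R := K) (lamC i) = 0 → ∀ i, a i = 0) :=
  stmt17_general K q hq τK hτK s r hr θ hθ αC hα0 hsurjC lamC hkerC hindC hdiscC
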